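/- arXiv:2305.09971 — 2 statements merged into one kernel-verified Lean document; each statement's English description precedes it below -/
import Mathlib

section
/- For n ≥ 3, the number of random walk labelings of the wheel graph W_{n+1} on n+1 vertices is L(W_{n+1}) = n\left((n-1)! - 2^{n-2} + 2^{n-1}\sum_{k=0}^{n-1} \frac{k!}{2^{k}}\right). -/
open Finset

/-- A sequence of `k` distinct vertices of `G` such that every vertex other than the
first is adjacent to some earlier vertex (a random walk labeling disrupted after the
`k`-th vertex). -/
def IsRWLPrefix {V : Type*} (G : SimpleGraph V) {k : ℕ} (v : Fin k → V) : Prop :=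
  Function.Injective v ∧ ∀ i : Fin k, i.val ≠ 0 → ∃ j : Fin k, j < i ∧ G.Adj (v j) (v i)

/-- `L_k(G)`: the number of random walk labelings of `G` disrupted after the `k`-th
vertex.  For `k = 0` this equals `1` (the empty sequence). -/
noncomputable def rwlPrefixCount {V : Type*} (G : SimpleGraph V) (k : ℕ) : ℕ :=
  Nat.card {v : Fin k → V // IsRWLPrefix G v}

/-- `L(G)`: the number of random walk labelings of `G`, i.e. orderings of all the
vertices of `G` in which every vertex other than the first is adjacent to some
earlier vertex. -/
noncomputable def rwlCount {V : Type*} (G : SimpleGraph V) [Fintype V] : ℕ :=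
  rwlPrefixCount G (Fintype.card V)

/-- The cone over `G`: a new vertex (`none`) joined to every vertex of `G`. -/
def SimpleGraph.cone {V : Type*} (G : SimpleGraph V) : SimpleGraph (Option V) :=
  SimpleGraph.fromRel (fun a b =>
    match a, b with
    | none, some _ => True
    | some x, some y => G.Adj x y
    | _, _ => False)

/-- The wheel graph `W_{n+1}`: the cone over the cycle graph `C_n`. -/
def wheelGraph (n : ℕ) : SimpleGraph (Option (Fin n)) :=
  (SimpleGraph.cycleGraph n).cone

/-!
Cutting a random walk labeling of the cone over `G` at the hub leaves, in front of the hub, a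
random walk labeling of `G` disrupted after `m` vertices, and behind it the other `n - m`
vertices in any order, so `L(W_{n+1}) = ∑ₘ L_m(C_n) (n - m)!`. A disrupted labeling of `C_n`
always covers an arc; an arc of `k` vertices has two outer neighbours when `k < n - 1` and one
when `k = n - 1`. Hence `L_m(C_n) = n 2^(m-1)` for `0 < m < n` and `L_n(C_n) = n 2^(n-2)`, and
the closed form follows by reversing the order of summation.
-/

namespace SimpleGraph

variable {V : Type*}

def outerBoundary (G : SimpleGraph V) (s : Set V) : Set V :=
  {x | x ∉ s ∧ ∃ y ∈ s, G.Adj y x}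

lemma cone_adj_some {G : SimpleGraph V} {x y : V} :
    G.cone.Adj (some x) (some y) ↔ G.Adj x y := by
  simp only [cone, fromRel_adj, ne_eq, Option.some.injEq]
  exact ⟨fun ⟨_, h⟩ => h.elim id G.adj_symm, fun h => ⟨h.ne, Or.inl h⟩⟩

lemma cone_adj_none_some {G : SimpleGraph V} (x : V) : G.cone.Adj none (some x) := by
  simp [cone]

def coneEmbedding (G : SimpleGraph V) : G ↪g G.cone :=
  ⟨Function.Embedding.some, cone_adj_some⟩

end SimpleGraph

open SimpleGraph

section RWLPrefix

variable {V W : Type*} {G : SimpleGraph V} {H : SimpleGraph W}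

lemma rwlPrefixCount_zero : rwlPrefixCount G 0 = 1 := by
  rw [rwlPrefixCount, Nat.card_eq_one_iff_unique]
  exact ⟨⟨fun a b => Subtype.ext (funext fun i => i.elim0)⟩,
    ⟨⟨Fin.elim0, fun a => a.elim0, fun i => i.elim0⟩⟩⟩

lemma rwlPrefixCount_one : rwlPrefixCount G 1 = Nat.card V := by
  have hall (v : Fin 1 → V) : IsRWLPrefix G v :=
    ⟨Function.injective_of_subsingleton v, fun i hi => absurd (Fin.val_eq_zero i) hi⟩
  rw [rwlPrefixCount, Nat.card_congr ((Equiv.subtypeUnivEquiv hall).trans (Equiv.funUnique _ _))]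

lemma IsRWLPrefix.comp_castLE {k l : ℕ} {v : Fin l → V} (hv : IsRWLPrefix G v) (h : k ≤ l) :
    IsRWLPrefix G (v ∘ Fin.castLE h) := by
  refine ⟨hv.1.comp (Fin.castLE_injective h), fun i hi => ?_⟩
  obtain ⟨j, hji, hj⟩ := hv.2 (Fin.castLE h i) hi
  exact ⟨⟨j, lt_trans hji i.isLt⟩, hji, hj⟩

lemma isRWLPrefix_comp_embedding (f : G ↪g H) {k : ℕ} {p : Fin k → V} :
    IsRWLPrefix H (f ∘ p) ↔ IsRWLPrefix G p := by
  simp only [IsRWLPrefix, Function.comp_apply, f.map_adj_iff, f.injective.of_comp_iff]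

lemma isRWLPrefix_snoc {k : ℕ} (hk : k ≠ 0) {p : Fin k → V} {x : V} :
    IsRWLPrefix G (Fin.snoc p x : Fin (k + 1) → V) ↔
      IsRWLPrefix G p ∧ x ∈ G.outerBoundary (Set.range p) := by
  simp only [IsRWLPrefix, outerBoundary, Fin.snoc_injective_iff, Set.exists_range_iff]
  constructor
  · rintro ⟨⟨hinj, hx⟩, hadj⟩
    refine ⟨⟨hinj, fun i hi => ?_⟩, hx, ?_⟩
    · obtain ⟨j, hji, hj⟩ := hadj i.castSucc hi
      obtain ⟨j, rfl⟩ := Fin.exists_castSucc_eq.mpr (Fin.ne_last_of_lt hji)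
      exact ⟨j, hji, by simpa using hj⟩
    · obtain ⟨j, hj, hadj⟩ := hadj (Fin.last k) hk
      obtain ⟨j, rfl⟩ := Fin.exists_castSucc_eq.mpr hj.ne
      exact ⟨j, by simpa using hadj⟩
  · rintro ⟨⟨hinj, hp⟩, hx, j, hj⟩
    refine ⟨⟨hinj, hx⟩, Fin.lastCases ?_ (fun i hi => ?_)⟩
    · exact fun _ => ⟨j.castSucc, Fin.castSucc_lt_last j, by simpa using hj⟩
    · obtain ⟨j, hji, hj⟩ := hp i hi
      exact ⟨j.castSucc, Fin.castSucc_lt_castSucc_iff.mpr hji, by simpa using hj⟩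

def rwlPrefixSnocEquiv {k : ℕ} (hk : k ≠ 0) :
    (Σ p : {p : Fin k → V // IsRWLPrefix G p}, G.outerBoundary (Set.range p.1)) ≃
      {v : Fin (k + 1) → V // IsRWLPrefix G v} where
  toFun x := ⟨Fin.snoc x.1.1 x.2.1, (isRWLPrefix_snoc hk).2 ⟨x.1.2, x.2.2⟩⟩
  invFun v :=
    have h := (isRWLPrefix_snoc hk).1 (by rw [Fin.snoc_init_self]; exact v.2)
    ⟨⟨Fin.init v.1, h.1⟩, ⟨v.1 (Fin.last k), h.2⟩⟩
  left_inv x := Sigma.subtype_ext (Subtype.ext (Fin.init_snoc (α := fun _ => V) _ _))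
    (Fin.snoc_last (α := fun _ => V) _ _)
  right_inv v := Subtype.ext (Fin.snoc_init_self v.1)

lemma rwlPrefixCount_succ_of_ncard_outerBoundary [Finite V] {k : ℕ} (hk : k ≠ 0) (b : ℕ)
    (hb : ∀ p : Fin k → V, IsRWLPrefix G p → (G.outerBoundary (Set.range p)).ncard = b) :
    rwlPrefixCount G (k + 1) = rwlPrefixCount G k * b := by
  have := Fintype.ofFinite {p : Fin k → V // IsRWLPrefix G p}
  rw [rwlPrefixCount, ← Nat.card_congr (rwlPrefixSnocEquiv hk), Nat.card_sigma]
  simp [Nat.card_coe_set_eq, hb _ (Subtype.prop _), rwlPrefixCount, Nat.card_eq_fintype_card]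

end RWLPrefix

section Cone

variable {V : Type*} {G : SimpleGraph V}

def coneGlue (n m : ℕ) (p : Fin m → V) (q : Fin (n - m) → V) (i : Fin (n + 1)) : Option V :=
  if h : (i : ℕ) < m then some (p ⟨i, h⟩)
  else if h' : (i : ℕ) = m then none
  else some (q ⟨i - m - 1, by have := i.isLt; omega⟩)

section coneGlue

variable {n m : ℕ} {p : Fin m → V} {q : Fin (n - m) → V} {i : Fin (n + 1)}

lemma coneGlue_of_lt (h : (i : ℕ) < m) : coneGlue n m p q i = some (p ⟨i, h⟩) := dif_pos h

lemma coneGlue_of_eq (h : (i : ℕ) = m) : coneGlue n m p q i = none := by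
  rw [coneGlue, dif_neg (by omega), dif_pos h]

lemma coneGlue_of_gt (h : m < i) :
    coneGlue n m p q i = some (q ⟨i - m - 1, by have := i.isLt; omega⟩) := by
  rw [coneGlue, dif_neg (by omega), dif_neg (by omega)]

lemma coneGlue_eq_none_iff : coneGlue n m p q i = none ↔ (i : ℕ) = m := by
  rcases lt_trichotomy (i : ℕ) m with h | h | h
  · simp [coneGlue_of_lt h, h.ne]
  · simp [coneGlue_of_eq h, h]
  · simp [coneGlue_of_gt h, h.ne']

lemma isRWLPrefix_cone_coneGlue (hp : IsRWLPrefix G p) (hq : Function.Injective q)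
    (hpq : ∀ j, q j ∉ Set.range p) : IsRWLPrefix G.cone (coneGlue n m p q) := by
  constructor
  · intro i j h
    rcases lt_trichotomy (i : ℕ) m with hi | hi | hi <;>
      rcases lt_trichotomy (j : ℕ) m with hj | hj | hj <;>
      simp only [coneGlue_of_lt, coneGlue_of_eq, coneGlue_of_gt, hi, hj, Option.some.injEq,
        reduceCtorEq] at h <;>
      first
      | exact Fin.ext (by omega)
      | exact absurd ⟨_, h.symm⟩ (hpq _)
      | exact absurd ⟨_, h⟩ (hpq _)
      | have := Fin.val_eq_of_eq (hp.1 h); exact Fin.ext (by simpa using this)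
      | have := Fin.val_eq_of_eq (hq h); exact Fin.ext (by simp only at this; omega)
  · intro i hi
    rcases lt_trichotomy (i : ℕ) m with him | him | him
    · obtain ⟨j, hji, hj⟩ := hp.2 ⟨i, him⟩ hi
      refine ⟨⟨j, by have : (j : ℕ) < i := hji; omega⟩, hji, ?_⟩
      rw [coneGlue_of_lt (show (j : ℕ) < m from j.isLt), coneGlue_of_lt him, cone_adj_some]
      exact hj
    · refine ⟨⟨0, by omega⟩, show 0 < (i : ℕ) by omega, ?_⟩
      rw [coneGlue_of_lt (show 0 < m by omega), coneGlue_of_eq him]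
      exact (cone_adj_none_some _).symm
    · refine ⟨⟨m, by omega⟩, him, ?_⟩
      rw [coneGlue_of_eq (i := ⟨m, _⟩) rfl, coneGlue_of_gt him]
      exact cone_adj_none_some _

lemma coneGlue_castLE (h : m ≤ n + 1) (i : Fin m) :
    coneGlue n m p q (Fin.castLE h i) = some (p i) :=
  coneGlue_of_lt i.isLt

lemma coneGlue_after_hub (j : Fin (n - m)) :
    coneGlue n m p q ⟨m + 1 + j, by omega⟩ = some (q j) := by
  rw [coneGlue_of_gt (show m < m + 1 + j by omega)]
  congr 3
  simp only
  omega

lemma isRWLPrefix_cone_coneGlue_iff (hm : m ≤ n) :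
    IsRWLPrefix G.cone (coneGlue n m p q) ↔
      IsRWLPrefix G p ∧ Function.Injective q ∧ ∀ j, q j ∉ Set.range p := by
  refine ⟨fun h => ⟨?_, fun j j' hjj => ?_, fun j ⟨i, hij⟩ => ?_⟩,
    fun h => isRWLPrefix_cone_coneGlue h.1 h.2.1 h.2.2⟩
  · have hcomp : coneGlue n m p q ∘ Fin.castLE (by omega) = G.coneEmbedding ∘ p :=
      funext (coneGlue_castLE _)
    rw [← isRWLPrefix_comp_embedding G.coneEmbedding, ← hcomp]
    exact h.comp_castLE _
  · have := h.1 <| (coneGlue_after_hub (p := p) j).trans <|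
      (congrArg some hjj).trans (coneGlue_after_hub j').symm
    exact Fin.ext (by simpa using this)
  · have := h.1 <| (coneGlue_after_hub j).trans <|
      (congrArg some hij.symm).trans (coneGlue_castLE (q := q) (by omega : m ≤ n + 1) i).symm
    simp only [Fin.ext_iff, Fin.val_castLE] at this
    omega

lemma exists_coneGlue_eq {v : Fin (n + 1) → Option V} (hv : Function.Injective v)
    {m : Fin (n + 1)} (hm : v m = none) : ∃ p q, coneGlue n m p q = v := by
  have hsome (i : Fin (n + 1)) (hi : (i : ℕ) ≠ m) : ∃ x, v i = some x :=
    Option.ne_none_iff_exists'.mp fun h => hi (congrArg Fin.val (hv (h.trans hm.symm)))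
  choose p hp using fun i : Fin m => hsome (Fin.castLE m.isLt.le i) i.isLt.ne
  choose q hq using fun j : Fin (n - m) =>
    hsome ⟨m + 1 + j, by omega⟩ (by simp only; omega)
  refine ⟨p, q, funext fun i => ?_⟩
  rcases lt_trichotomy (i : ℕ) m with h | h | h
  · rw [coneGlue_of_lt h, ← hp]
    rfl
  · rw [coneGlue_of_eq h, ← hm, Fin.ext h]
  · rw [coneGlue_of_gt h, ← hq]
    congr
    simp only
    omega

lemma coneGlue_inj (hm : m ≤ n + 1) {p' : Fin m → V} {q' : Fin (n - m) → V} :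
    coneGlue n m p q = coneGlue n m p' q' ↔ p = p' ∧ q = q' := by
  refine ⟨fun h => ⟨funext fun i => ?_, funext fun j => ?_⟩, fun h => h.1 ▸ h.2 ▸ rfl⟩
  · exact Option.some_injective _ (by rw [← coneGlue_castLE hm, h, coneGlue_castLE])
  · exact Option.some_injective _ (by rw [← coneGlue_after_hub, h, coneGlue_after_hub])

end coneGlue

variable (G) in
def coneGlueMap (n : ℕ) :
    (Σ m : Fin (n + 1), Σ p : {p : Fin m → V // IsRWLPrefix G p},
      Fin (n - m) ↪ ↥(Set.range p.1)ᶜ) → {v : Fin (n + 1) → Option V // IsRWLPrefix G.cone v} :=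
  fun x => ⟨coneGlue n x.1 x.2.1.1 (fun j => x.2.2 j), isRWLPrefix_cone_coneGlue x.2.1.2
    (Subtype.val_injective.comp x.2.2.injective) (fun j => (x.2.2 j).2)⟩

lemma coneGlueMap_bijective [Fintype V] :
    Function.Bijective (coneGlueMap G (Fintype.card V)) := by
  constructor
  · rintro ⟨m, ⟨p, hp⟩, q⟩ ⟨m', ⟨p', hp'⟩, q'⟩ h
    have h := congrArg Subtype.val h
    simp only [coneGlueMap] at h
    obtain rfl : m = m' := by
      have := congrFun h m
      rw [coneGlue_of_eq rfl, eq_comm, coneGlue_eq_none_iff] at this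
      exact Fin.ext this
    obtain ⟨rfl, hq⟩ := (coneGlue_inj (by omega)).1 h
    obtain rfl : q = q' := Function.Embedding.ext fun j => Subtype.ext (congrFun hq j)
    rfl
  · rintro ⟨v, hv⟩
    have hbij : Function.Bijective v :=
      (Fintype.bijective_iff_injective_and_card v).mpr ⟨hv.1, by simp⟩
    obtain ⟨m, hm⟩ := hbij.2 none
    obtain ⟨p, q, rfl⟩ := exists_coneGlue_eq hv.1 hm
    obtain ⟨hp, hq, hpq⟩ := (isRWLPrefix_cone_coneGlue_iff (by omega)).1 hv
    exact ⟨⟨m, ⟨p, hp⟩, ⟨fun j => ⟨q j, hpq j⟩, fun j j' h => hq (congrArg Subtype.val h)⟩⟩, rfl⟩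

theorem rwlCount_cone [Fintype V] :
    rwlCount G.cone = ∑ m ∈ range (Fintype.card V + 1),
      rwlPrefixCount G m * (Fintype.card V - m).factorial := by
  classical
  rw [rwlCount, Fintype.card_option, rwlPrefixCount,
    ← Nat.card_congr (Equiv.ofBijective _ coneGlueMap_bijective), Nat.card_sigma,
    ← Fin.sum_univ_eq_sum_range]
  refine Finset.sum_congr rfl fun m _ => ?_
  have hcompl (p : {p : Fin m → V // IsRWLPrefix G p}) :
      Fintype.card ↥(Set.range p.1)ᶜ = Fintype.card V - m := by
    rw [← Nat.card_eq_fintype_card, Nat.card_coe_set_eq, Set.ncard_compl, ← Nat.card_coe_set_eq,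
      Nat.card_range_of_injective p.2.1, Nat.card_fin, Nat.card_eq_fintype_card]
  simp [Nat.card_eq_fintype_card, Fintype.card_embedding_eq, hcompl, rwlPrefixCount,
    Nat.descFactorial_self]

end Cone

section Cycle

variable {n : ℕ}

lemma Fin.val_sub_eq_ite (a b : Fin n) :
    ((a - b : Fin n) : ℕ) = if (b : ℕ) ≤ a then (a : ℕ) - b else n + a - b := by
  split_ifs with h
  · exact Fin.sub_val_of_le h
  · exact Fin.coe_sub_iff_lt.mpr (not_le.mp h)

variable [NeZero n]

/-- The `k` consecutive vertices `c, c + 1, …, c + (k - 1)` of the cycle `Fin n`. -/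
def arc (c : Fin n) (k : ℕ) : Set (Fin n) := {y | ((y - c : Fin n) : ℕ) < k}

lemma outerBoundary_arc {c : Fin n} {k : ℕ} (hk : k ≠ 0) (hkn : k < n) :
    (cycleGraph n).outerBoundary (arc c k) =
      {x | ((x - c : Fin n) : ℕ) = k ∨ ((x - c : Fin n) : ℕ) = n - 1} := by
  ext x
  simp only [outerBoundary, arc, cycleGraph_adj', Set.mem_ofPred_eq]
  constructor
  · rintro ⟨hx, y, hy, hadj⟩
    rw [← sub_sub_sub_cancel_right y x c, ← sub_sub_sub_cancel_right x y c] at hadj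
    generalize y - c = s at *
    generalize x - c = t at *
    rw [Fin.val_sub_eq_ite, Fin.val_sub_eq_ite] at hadj
    have := t.isLt
    split_ifs at hadj <;> omega
  · intro hx
    refine ⟨by omega, ?_⟩
    rcases hx with hx | hx
    · refine ⟨c + ⟨k - 1, by omega⟩, by rw [add_sub_cancel_left, Fin.val_mk]; omega, Or.inr ?_⟩
      rw [← sub_sub_sub_cancel_right x _ c, add_sub_cancel_left, Fin.val_sub_eq_ite, Fin.val_mk]
      split_ifs <;> omega
    · refine ⟨c, by simpa using Nat.pos_of_ne_zero hk, Or.inl ?_⟩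
      rw [← sub_sub_sub_cancel_right c x c, sub_self, Fin.val_sub_eq_ite, Fin.val_zero]
      split_ifs <;> omega

lemma ncard_outerBoundary_arc (c : Fin n) {k : ℕ} (hk : k ≠ 0) (hkn : k < n) :
    ((cycleGraph n).outerBoundary (arc c k)).ncard = if k + 1 = n then 1 else 2 := by
  have hpair : (cycleGraph n).outerBoundary (arc c k) =
      {c + ⟨k, hkn⟩, c + ⟨n - 1, by omega⟩} := by
    ext x
    simp only [outerBoundary_arc hk hkn, Set.mem_ofPred_eq, Set.mem_insert_iff,
      Set.mem_singleton_iff, ← sub_eq_iff_eq_add', Fin.ext_iff]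
  rw [hpair]
  split_ifs with hk1
  · simp [show k = n - 1 by omega]
  · refine Set.ncard_pair fun h => hk1 ?_
    have := congrArg Fin.val (add_left_cancel h)
    simp only at this
    omega

lemma exists_insert_eq_arc {c x : Fin n} {k : ℕ} (hk : k ≠ 0)
    (hx : x ∈ (cycleGraph n).outerBoundary (arc c k)) :
    ∃ c', insert x (arc c k) = arc c' (k + 1) := by
  have hkn : k < n := lt_of_le_of_lt (not_lt.mp hx.1) (x - c).isLt
  rw [outerBoundary_arc hk hkn] at hx
  have hxc (y : Fin n) : y = x ↔ ((y - c : Fin n) : ℕ) = ((x - c : Fin n) : ℕ) := by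
    rw [← Fin.ext_iff, sub_left_inj]
  rcases hx with hx | hx
  · refine ⟨c, Set.ext fun y => ?_⟩
    simp only [arc, Set.mem_insert_iff, Set.mem_ofPred_eq, hxc]
    omega
  · refine ⟨x, Set.ext fun y => ?_⟩
    simp only [arc, Set.mem_insert_iff, Set.mem_ofPred_eq, hxc]
    rw [← sub_sub_sub_cancel_right y x c]
    generalize y - c = s at *
    generalize x - c = t at *
    rw [Fin.val_sub_eq_ite]
    have := s.isLt
    split_ifs <;> omega

lemma exists_range_eq_arc {k : ℕ} (hk : k ≠ 0) {p : Fin k → Fin n}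
    (hp : IsRWLPrefix (cycleGraph n) p) : ∃ c, Set.range p = arc c k := by
  induction k, Nat.one_le_iff_ne_zero.mpr hk using Nat.le_induction with
  | base =>
    refine ⟨p 0, Set.ext fun y => ?_⟩
    simp only [arc, Set.mem_range, Set.mem_ofPred_eq, Fin.exists_fin_one, Nat.lt_one_iff,
      Fin.val_eq_zero_iff, sub_eq_zero]
    exact eq_comm
  | succ k hk1 ih =>
    rw [← Fin.snoc_init_self p, isRWLPrefix_snoc (by omega)] at hp
    obtain ⟨c, hc⟩ := ih (by omega) hp.1
    rw [hc] at hp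
    obtain ⟨c', hc'⟩ := exists_insert_eq_arc (by omega) hp.2
    exact ⟨c', by rw [← Fin.snoc_init_self p, Fin.range_snoc, hc, hc']⟩

lemma ncard_outerBoundary_range_cycleGraph {k : ℕ} (hk : k ≠ 0) (hkn : k < n)
    {p : Fin k → Fin n} (hp : IsRWLPrefix (cycleGraph n) p) :
    ((cycleGraph n).outerBoundary (Set.range p)).ncard = if k + 1 = n then 1 else 2 := by
  obtain ⟨c, hc⟩ := exists_range_eq_arc hk hp
  rw [hc, ncard_outerBoundary_arc c hk hkn]

lemma rwlPrefixCount_cycleGraph_of_lt {k : ℕ} (hk : k ≠ 0) (hkn : k < n) :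
    rwlPrefixCount (cycleGraph n) k = n * 2 ^ (k - 1) := by
  induction k, Nat.one_le_iff_ne_zero.mpr hk using Nat.le_induction with
  | base => simp [rwlPrefixCount_one]
  | succ k hk1 ih =>
    have htwo (p : Fin k → Fin n) (hp : IsRWLPrefix (cycleGraph n) p) :
        ((cycleGraph n).outerBoundary (Set.range p)).ncard = 2 := by
      rw [ncard_outerBoundary_range_cycleGraph (by omega) (by omega) hp, if_neg (by omega)]
    rw [rwlPrefixCount_succ_of_ncard_outerBoundary (by omega) 2 htwo, ih (by omega) (by omega),
      mul_assoc, ← pow_succ, Nat.sub_add_cancel hk1, Nat.add_sub_cancel]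

lemma rwlPrefixCount_cycleGraph_self (hn : 2 ≤ n) :
    rwlPrefixCount (cycleGraph n) n = n * 2 ^ (n - 2) := by
  obtain ⟨k, rfl⟩ : ∃ k, n = k + 1 := ⟨n - 1, by omega⟩
  have hone (p : Fin k → Fin (k + 1)) (hp : IsRWLPrefix (cycleGraph (k + 1)) p) :
      ((cycleGraph (k + 1)).outerBoundary (Set.range p)).ncard = 1 := by
    rw [ncard_outerBoundary_range_cycleGraph (by omega) (by omega) hp, if_pos rfl]
  rw [rwlPrefixCount_succ_of_ncard_outerBoundary (by omega) 1 hone,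
    rwlPrefixCount_cycleGraph_of_lt (by omega) (by omega), mul_one]
  rfl

end Cycle

lemma two_pow_mul_sum_factorial_div_two_pow (N : ℕ) :
    (2 : ℚ) ^ N * ∑ j ∈ range (N + 1), (j.factorial : ℚ) / 2 ^ j =
      ∑ j ∈ range (N + 1), 2 ^ j * ((N - j).factorial : ℚ) := by
  rw [mul_sum, ← sum_range_reflect]
  refine sum_congr rfl fun j hj => ?_
  rw [mem_range] at hj
  have hpow : (2 : ℚ) ^ N = 2 ^ j * 2 ^ (N - j) := by
    rw [← pow_add, Nat.add_sub_cancel' (by omega)]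
  rw [hpow, show N + 1 - 1 - j = N - j by omega]
  field_simp

theorem rwlCount_wheelGraph (n : ℕ) (hn : 3 ≤ n) :
    (rwlCount (wheelGraph n) : ℚ) =
      n * ((n - 1).factorial - 2 ^ (n - 2) +
        2 ^ (n - 1) * ∑ k ∈ Finset.range n, (k.factorial : ℚ) / 2 ^ k) := by
  obtain ⟨k, rfl⟩ : ∃ k, n = k + 2 := ⟨n - 2, by omega⟩
  rw [wheelGraph, rwlCount_cone, Fintype.card_fin, sum_range_succ, sum_range_succ',
    rwlPrefixCount_zero, rwlPrefixCount_cycleGraph_self (by omega),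
    sum_congr rfl fun m hm => by
      rw [rwlPrefixCount_cycleGraph_of_lt (by omega) (by rw [mem_range] at hm; omega)]]
  simp only [Nat.add_sub_cancel]
  push_cast
  rw [two_pow_mul_sum_factorial_div_two_pow, sum_range_succ _ (k + 1), Nat.factorial_succ (k + 1)]
  simp only [Nat.sub_self, Nat.factorial_zero, mul_assoc, ← mul_sum]
  push_cast
  ring
end

section
/- For m ≥ 1 and n ≥ 1, the number of random walk labelings of the (m,n)-lollipop graph is L(L_{m,n}) = (m-1)!\left(\binom{m+n}{n+1} + \sum_{k=0}^{n-1}\binom{m+n-1}{k+m}\right). -/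
open Finset

/-- The graph obtained from the disjoint union of `G` and `H` by joining the
vertex `a` of `G` to the vertex `b` of `H` by an edge (a bridge). -/
def bridgeJoin {V W : Type*} (G : SimpleGraph V) (H : SimpleGraph W) (a : V) (b : W) :
    SimpleGraph (V ⊕ W) :=
  SimpleGraph.fromRel (fun x y =>
    match x, y with
    | Sum.inl u, Sum.inl v => G.Adj u v
    | Sum.inr u, Sum.inr v => H.Adj u v
    | Sum.inl u, Sum.inr v => u = a ∧ v = b
    | Sum.inr _, Sum.inl _ => False)

/-! In a graph without isolated vertices every vertex `v` may come last in a random walk labeling,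
and what precedes it is a random walk labeling of `G - v`; hence `L(G) = ∑ᵥ L(G - v)`, where
`L(G - v) = 0` when `G - v` is disconnected. The only deletions that leave the lollipop connected
are those of a clique vertex other than the bridge vertex, leaving `L_{m-1,n}`, and of the free end
of the path, leaving `L_{m,n-1}`. So `L(L_{m,n}) = (m-1) L(L_{m-1,n}) + L(L_{m,n-1})` for `m ≥ 2`,
`n ≥ 1`; together with `L(L_{m,0}) = m!` and `L(L_{1,n}) = 2ⁿ` (a path) this determines `L`, and the
closed formula satisfies the same recursion because its bracket obeys Pascal's rule. -/

open SimpleGraph Sum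

section RandomWalkLabeling

variable {V W : Type*} {G : SimpleGraph V} {H : SimpleGraph W}

theorem SimpleGraph.Embedding.isRWLPrefix_comp_iff (φ : H ↪g G) {k : ℕ} {f : Fin k → W} :
    IsRWLPrefix G (φ ∘ f) ↔ IsRWLPrefix H f := by
  simp only [IsRWLPrefix, φ.injective.of_comp_iff, Function.comp_apply, φ.map_adj_iff]

theorem rwlCount_congr [Fintype V] [Fintype W] (e : G ≃g H) : rwlCount G = rwlCount H := by
  rw [rwlCount, rwlCount, rwlPrefixCount, rwlPrefixCount, e.card_eq]
  exact Nat.card_congr <| .symm <| (Equiv.arrowCongr (.refl _) e.symm.toEquiv).subtypeEquiv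
    fun f => e.symm.toEmbedding.isRWLPrefix_comp_iff.symm

theorem isRWLPrefix_top_iff {k : ℕ} {f : Fin k → V} :
    IsRWLPrefix (⊤ : SimpleGraph V) f ↔ Function.Injective f := by
  refine ⟨And.left, fun hf => ⟨hf, fun i hi => ⟨⟨0, i.pos⟩, ?_, ?_⟩⟩⟩
  · exact Fin.lt_def.mpr (Nat.pos_of_ne_zero hi)
  · exact hf.ne (Fin.ne_of_val_ne (Ne.symm hi))

theorem rwlCount_top [Fintype V] : rwlCount (⊤ : SimpleGraph V) = (Fintype.card V).factorial := by
  classical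
  simp only [rwlCount, rwlPrefixCount, isRWLPrefix_top_iff]
  rw [Nat.card_congr (Equiv.subtypeInjectiveEquivEmbedding _ _), Nat.card_eq_fintype_card,
    Fintype.card_embedding_eq, Fintype.card_fin, Nat.descFactorial_self]

theorem IsRWLPrefix.iff_of_forall_adj {k : ℕ} {f : Fin k → V} (hf : IsRWLPrefix G f)
    (P : V → Prop) (hP : ∀ u w, G.Adj u w → (P u ↔ P w)) (i j : Fin k) :
    P (f i) ↔ P (f j) := by
  have key (i : Fin k) : P (f i) ↔ P (f ⟨0, i.pos⟩) := by
    induction i using WellFoundedLT.induction with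
    | _ i ih =>
      by_cases hi : i.val = 0
      · rw [show i = ⟨0, i.pos⟩ from Fin.ext hi]
      · obtain ⟨j, hji, hadj⟩ := hf.2 i hi
        exact (hP _ _ hadj).symm.trans (ih j hji)
  exact (key i).trans (key j).symm

theorem rwlCount_eq_zero_of_forall_adj [Fintype V] (P : V → Prop)
    (hP : ∀ u w, G.Adj u w → (P u ↔ P w)) {x y : V} (hx : P x) (hy : ¬ P y) :
    rwlCount G = 0 := by
  refine Nat.card_eq_zero.mpr (Or.inl ⟨fun ⟨f, hf⟩ => ?_⟩)
  have hsurj : Function.Surjective f :=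
    ((Fintype.bijective_iff_injective_and_card f).mpr ⟨hf.1, Fintype.card_fin _⟩).2
  obtain ⟨i, rfl⟩ := hsurj x
  obtain ⟨j, rfl⟩ := hsurj y
  exact hy ((hf.iff_of_forall_adj P hP i j).mp hx)

noncomputable def rwlPrefixInitEquiv [Fintype V] [DecidableEq V] {k : ℕ}
    (hk : Fintype.card V = k + 1) (v : V) (hv : ∃ w, G.Adj v w) :
    {f : {f : Fin (k + 1) → V // IsRWLPrefix G f} // f.1 (Fin.last k) = v} ≃
      {g : Fin k → ({v}ᶜ : Set V) // IsRWLPrefix (G.induce {v}ᶜ) g} where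
  toFun f :=
    ⟨fun i => ⟨f.1.1 i.castSucc, fun h => (Fin.castSucc_lt_last i).ne
      (f.1.2.1 (h.trans f.2.symm))⟩, by
      refine ⟨fun i j h => Fin.castSucc_injective _ (f.1.2.1 (congrArg Subtype.val h)),
        fun i hi => ?_⟩
      obtain ⟨j, hji, hadj⟩ := f.1.2.2 i.castSucc hi
      obtain ⟨j, rfl⟩ := Fin.exists_castSucc_eq.mpr (hji.trans (Fin.castSucc_lt_last i)).ne
      exact ⟨j, Fin.castSucc_lt_castSucc_iff.mp hji, hadj⟩⟩
  invFun g :=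
    ⟨⟨Fin.snoc (fun i => (g.1 i : V)) v, by
      have hsurj : Function.Surjective g.1 :=
        ((Fintype.bijective_iff_injective_and_card g.1).mpr ⟨g.2.1, by
          rw [Fintype.card_fin, Fintype.card_compl_set, hk]; simp⟩).2
      refine ⟨Fin.snoc_injective_iff.mpr ⟨Subtype.val_injective.comp g.2.1, ?_⟩, fun i hi => ?_⟩
      · rintro ⟨i, hi⟩; exact (g.1 i).2 hi
      · induction i using Fin.lastCases with
        | last =>
          obtain ⟨w, hvw⟩ := hv
          obtain ⟨j, hj⟩ := hsurj ⟨w, hvw.ne.symm⟩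
          refine ⟨j.castSucc, Fin.castSucc_lt_last j, ?_⟩
          simpa [hj] using hvw.symm
        | cast i =>
          obtain ⟨j, hji, hadj⟩ := g.2.2 i hi
          exact ⟨j.castSucc, Fin.castSucc_lt_castSucc_iff.mpr hji, by simpa using hadj⟩⟩,
      by simp⟩
  left_inv f := by
    obtain ⟨⟨f, hf⟩, rfl⟩ := f
    exact Subtype.ext (Subtype.ext (Fin.snoc_init_self f))
  right_inv g := by
    ext i
    simp

theorem rwlCount_eq_sum_rwlCount_induce_compl [Fintype V] [DecidableEq V] [Nonempty V]
    (hG : ∀ v, ∃ w, G.Adj v w) :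
    rwlCount G = ∑ v, rwlCount (G.induce {v}ᶜ) := by
  obtain ⟨k, hk⟩ := Nat.exists_eq_add_one.mpr (Fintype.card_pos (α := V))
  have hcard (v : V) : Fintype.card ({v}ᶜ : Set V) = k := by
    rw [Fintype.card_compl_set, hk]; simp
  have hsub (v : V) : rwlCount (G.induce {v}ᶜ) = rwlPrefixCount (G.induce {v}ᶜ) k := by
    rw [rwlCount, hcard]
  rw [rwlCount, hk, rwlPrefixCount]
  simp only [hsub, rwlPrefixCount]
  rw [← Nat.card_congr (Equiv.sigmaFiberEquiv
      fun f : {f : Fin (k + 1) → V // IsRWLPrefix G f} => f.1 (Fin.last k)), Nat.card_sigma]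
  exact Finset.sum_congr rfl fun v _ => Nat.card_congr (rwlPrefixInitEquiv hk v (hG v))

theorem rwlCount_induce_of_range_eq [Fintype W] {s : Set V} [Fintype s]
    (φ : H ↪g G) (hφ : Set.range φ = s) : rwlCount (G.induce s) = rwlCount H := by
  subst hφ
  exact rwlCount_congr φ.isoInduceRange.symm

end RandomWalkLabeling

/-- The bracket of the closed formula for `L(L_{m+1,n})`. -/
def lollipopBinomialSum (m n : ℕ) : ℕ :=
  (m + 1 + n).choose (n + 1) + ∑ k ∈ Finset.range n, (m + n).choose (k + (m + 1))

theorem lollipopBinomialSum_zero_right (m : ℕ) : lollipopBinomialSum m 0 = m + 1 := by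
  simp [lollipopBinomialSum]

theorem lollipopBinomialSum_zero_left (n : ℕ) : lollipopBinomialSum 0 n = 2 ^ n := by
  have h := Nat.sum_range_choose n
  rw [Finset.sum_range_succ', Nat.choose_zero_right] at h
  simp [lollipopBinomialSum, add_comm _ 1, ← h]

theorem lollipopBinomialSum_add_one_add_one (m n : ℕ) :
    lollipopBinomialSum (m + 1) (n + 1) =
      lollipopBinomialSum m (n + 1) + lollipopBinomialSum (m + 1) n := by
  have hpascal : (m + 1 + 1 + (n + 1)).choose (n + 1 + 1) =
      (m + 1 + (n + 1)).choose (n + 1 + 1) + (m + 1 + 1 + n).choose (n + 1) := by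
    rw [show m + 1 + 1 + (n + 1) = m + 1 + (n + 1) + 1 by omega, Nat.choose_succ_succ',
      show m + 1 + (n + 1) = m + 1 + 1 + n by omega, add_comm]
  have hsum : ∑ k ∈ Finset.range (n + 1), (m + 1 + (n + 1)).choose (k + (m + 1 + 1)) =
      ∑ k ∈ Finset.range (n + 1), (m + (n + 1)).choose (k + (m + 1)) +
        ∑ k ∈ Finset.range n, (m + 1 + n).choose (k + (m + 1 + 1)) := by
    have htop : (m + 1 + n).choose (n + (m + 1 + 1)) = 0 := Nat.choose_eq_zero_of_lt (by omega)
    calc ∑ k ∈ Finset.range (n + 1), (m + 1 + (n + 1)).choose (k + (m + 1 + 1))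
        _ = ∑ k ∈ Finset.range (n + 1), ((m + (n + 1)).choose (k + (m + 1)) +
              (m + 1 + n).choose (k + (m + 1 + 1))) := by
          refine Finset.sum_congr rfl fun k _ => ?_
          rw [show m + 1 + (n + 1) = m + (n + 1) + 1 by omega,
            show k + (m + 1 + 1) = k + (m + 1) + 1 by omega, Nat.choose_succ_succ',
            show m + (n + 1) = m + 1 + n by omega]
        _ = _ := by
          rw [Finset.sum_add_distrib,
            Finset.sum_range_succ (fun k => (m + 1 + n).choose (k + (m + 1 + 1))) n, htop, add_zero]
  simp only [lollipopBinomialSum, hpascal, hsum]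
  ring

/-- The lollipop `L_{m,n}` with the bridge between the vertices `0` of `K_m` and of `P_n`, defined
for all `m n`: `lollipop 0 n` is the path `P_n` and `lollipop m 0` is `K_m`. -/
def lollipop (m n : ℕ) : SimpleGraph (Fin m ⊕ Fin n) where
  Adj
    | inl u, inl v => u ≠ v
    | inr u, inr v => (pathGraph n).Adj u v
    | inl u, inr v => u.val = 0 ∧ v.val = 0
    | inr u, inl v => v.val = 0 ∧ u.val = 0
  symm := ⟨by
    rintro (u | u) (v | v) h
    exacts [Ne.symm h, h, h, h.symm]⟩
  loopless := ⟨by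
    rintro (u | u) h
    exacts [h rfl, (pathGraph n).loopless.irrefl u h]⟩

section Lollipop

variable {m n : ℕ}

@[simp] theorem lollipop_adj_inl_inl {u v : Fin m} :
    (lollipop m n).Adj (inl u) (inl v) ↔ u ≠ v := .rfl

@[simp] theorem lollipop_adj_inr_inr {u v : Fin n} :
    (lollipop m n).Adj (inr u) (inr v) ↔ u.val + 1 = v.val ∨ v.val + 1 = u.val := pathGraph_adj

@[simp] theorem lollipop_adj_inl_inr {u : Fin m} {v : Fin n} :
    (lollipop m n).Adj (inl u) (inr v) ↔ u.val = 0 ∧ v.val = 0 := .rfl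

@[simp] theorem lollipop_adj_inr_inl {u : Fin n} {v : Fin m} :
    (lollipop m n).Adj (inr u) (inl v) ↔ v.val = 0 ∧ u.val = 0 := .rfl

theorem bridgeJoin_top_pathGraph (hm : 1 ≤ m) (hn : 1 ≤ n) :
    bridgeJoin ⊤ (pathGraph n) ⟨0, hm⟩ ⟨0, hn⟩ = lollipop m n := by
  ext (u | u) (v | v) <;> simp [bridgeJoin, Fin.ext_iff, pathGraph_adj] <;> grind

def lollipopZeroIsoTop (m : ℕ) : lollipop m 0 ≃g (⊤ : SimpleGraph (Fin m)) where
  toEquiv := Equiv.sumEmpty (Fin m) (Fin 0)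
  map_rel_iff' {x y} := by
    rcases x with u | u <;> rcases y with v | v <;> first | exact u.elim0 | exact v.elim0 | simp

def lollipopOneIso (n : ℕ) : lollipop 1 n ≃g lollipop 0 (n + 1) where
  toFun := Sum.elim (fun _ => inr 0) (fun q => inr q.succ)
  invFun := Sum.elim Fin.elim0 (Fin.cases (inl 0) inr)
  left_inv := by
    rintro (u | u)
    · rw [Subsingleton.elim u 0]; rfl
    · rfl
  right_inv := by
    rintro (u | u)
    · exact u.elim0
    · induction u using Fin.cases <;> rfl
  map_rel_iff' {x y} := by
    rcases x with u | u <;> rcases y with v | v <;> simp; omega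

def lollipopEmbeddingSuccAbove (c : Fin (m + 1)) (hc : c ≠ 0 ∨ m = 0) :
    lollipop m n ↪g lollipop (m + 1) n where
  toFun := Sum.map c.succAbove id
  inj' := Sum.map_injective.mpr ⟨Fin.succAbove_right_injective, Function.injective_id⟩
  map_rel_iff' {x y} := by
    have hzero (u : Fin m) : (c.succAbove u).val = 0 ↔ u.val = 0 := by
      rcases hc with hc | rfl
      · have : NeZero m := ⟨u.pos.ne'⟩
        rw [Fin.val_eq_zero_iff, Fin.val_eq_zero_iff, Fin.succAbove_eq_zero_iff hc]
      · exact u.elim0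
    rcases x with u | u <;> rcases y with v | v <;> simp [hzero]

theorem range_lollipopEmbeddingSuccAbove (c : Fin (m + 1)) (hc : c ≠ 0 ∨ m = 0) :
    Set.range (lollipopEmbeddingSuccAbove (n := n) c hc) = {inl c}ᶜ := by
  ext (u | u)
  · simpa [lollipopEmbeddingSuccAbove, eq_comm] using Fin.exists_succAbove_eq_iff (x := c) (y := u)
  · simp [lollipopEmbeddingSuccAbove]

def lollipopEmbeddingCastSucc : lollipop m n ↪g lollipop m (n + 1) where
  toFun := Sum.map id Fin.castSucc
  inj' := Sum.map_injective.mpr ⟨Function.injective_id, Fin.castSucc_injective n⟩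
  map_rel_iff' {x y} := by
    rcases x with u | u <;> rcases y with v | v <;> simp

theorem range_lollipopEmbeddingCastSucc :
    Set.range (lollipopEmbeddingCastSucc (m := m) (n := n)) = {inr (Fin.last n)}ᶜ := by
  ext (u | u) <;> simp [lollipopEmbeddingCastSucc, Fin.exists_castSucc_eq]

theorem rwlCount_lollipop_induce_inl_zero :
    rwlCount ((lollipop (m + 2) (n + 1)).induce {inl 0}ᶜ) = 0 := by
  refine rwlCount_eq_zero_of_forall_adj (fun x => x.1.isLeft) ?_
    (x := ⟨inl 1, by simp⟩) (y := ⟨inr 0, by simp⟩) rfl (by simp)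
  rintro ⟨u | u, hu⟩ ⟨v | v, hv⟩ h
  · rfl
  · simp only [Set.mem_compl_iff, Set.mem_singleton_iff, inl.injEq] at hu
    exact absurd (Fin.ext h.1) hu
  · simp only [Set.mem_compl_iff, Set.mem_singleton_iff, inl.injEq] at hv
    exact absurd (Fin.ext h.1) hv
  · rfl

theorem rwlCount_lollipop_induce_inr_castSucc (q : Fin n) :
    rwlCount ((lollipop (m + 1) (n + 1)).induce {inr q.castSucc}ᶜ) = 0 := by
  refine rwlCount_eq_zero_of_forall_adj (fun x => Sum.elim (fun _ => False) (q.val < ·.val) x.1)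
    ?_ (x := ⟨inr q.succ, by simp [Fin.ext_iff]⟩) (y := ⟨inl 0, by simp⟩) (by simp) (by simp)
  rintro ⟨u | u, hu⟩ ⟨v | v, hv⟩ h
  · exact .rfl
  · simp [h.2]
  · simp [h.2]
  · simp only [Set.mem_compl_iff, Set.mem_singleton_iff, inr.injEq, Fin.ext_iff,
      Fin.val_castSucc] at hu hv
    simp only [induce_adj, lollipop_adj_inr_inr] at h
    simp only [Sum.elim_inr]
    omega

theorem lollipop_exists_adj (x : Fin (m + 1) ⊕ Fin (n + 1)) :
    ∃ y, (lollipop (m + 1) (n + 1)).Adj x y := by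
  rcases x with u | u
  · by_cases hu : u = 0
    · exact ⟨inr 0, by simp [hu]⟩
    · exact ⟨inl 0, by simpa using hu⟩
  · by_cases hu : u.val = 0
    · exact ⟨inl 0, by simp [hu]⟩
    · exact ⟨inr ⟨u.val - 1, by omega⟩, by simp; omega⟩

theorem rwlCount_lollipop_add_one_add_one :
    rwlCount (lollipop (m + 1) (n + 1)) =
      ∑ c : Fin (m + 1), rwlCount ((lollipop (m + 1) (n + 1)).induce {inl c}ᶜ) +
        rwlCount (lollipop (m + 1) n) := by
  rw [rwlCount_eq_sum_rwlCount_induce_compl lollipop_exists_adj, Fintype.sum_sum_type]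
  congr 1
  rw [Fin.sum_univ_castSucc]
  simp only [rwlCount_lollipop_induce_inr_castSucc, Finset.sum_const_zero, zero_add,
    rwlCount_induce_of_range_eq _ range_lollipopEmbeddingCastSucc]

theorem rwlCount_lollipop_zero_right : rwlCount (lollipop m 0) = m.factorial := by
  rw [rwlCount_congr (lollipopZeroIsoTop m), rwlCount_top, Fintype.card_fin]

theorem rwlCount_lollipop_one_left : rwlCount (lollipop 1 n) = 2 ^ n := by
  induction n with
  | zero => exact rwlCount_lollipop_zero_right
  | succ n ih =>
    rw [rwlCount_lollipop_add_one_add_one, Fin.sum_univ_one,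
      rwlCount_induce_of_range_eq _ (range_lollipopEmbeddingSuccAbove 0 (.inr rfl)),
      ← rwlCount_congr (lollipopOneIso n), ih, pow_succ]
    ring

theorem rwlCount_lollipop_add_two_add_one :
    rwlCount (lollipop (m + 2) (n + 1)) =
      (m + 1) * rwlCount (lollipop (m + 1) (n + 1)) + rwlCount (lollipop (m + 2) n) := by
  rw [rwlCount_lollipop_add_one_add_one, Fin.sum_univ_succ, rwlCount_lollipop_induce_inl_zero,
    zero_add]
  simp only [rwlCount_induce_of_range_eq _
    (range_lollipopEmbeddingSuccAbove _ (.inl (Fin.succ_ne_zero _))), Finset.sum_const,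
    Finset.card_univ, Fintype.card_fin, smul_eq_mul]

theorem rwlCount_lollipop_add_one :
    rwlCount (lollipop (m + 1) n) = m.factorial * lollipopBinomialSum m n := by
  induction m generalizing n with
  | zero => rw [rwlCount_lollipop_one_left, lollipopBinomialSum_zero_left, Nat.factorial_zero,
      one_mul]
  | succ m ihm =>
    induction n with
    | zero => rw [rwlCount_lollipop_zero_right, lollipopBinomialSum_zero_right,
        Nat.factorial_succ, mul_comm]
    | succ n ihn =>
      rw [rwlCount_lollipop_add_two_add_one, ihm, ihn, lollipopBinomialSum_add_one_add_one,
        Nat.factorial_succ]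
      ring

end Lollipop

theorem rwlCount_lollipop (m n : ℕ) (hm : 1 ≤ m) (hn : 1 ≤ n) :
    rwlCount (bridgeJoin (⊤ : SimpleGraph (Fin m)) (SimpleGraph.pathGraph n)
        ⟨0, hm⟩ ⟨0, hn⟩) =
      (m - 1).factorial *
        (Nat.choose (m + n) (n + 1) +
          ∑ k ∈ Finset.range n, Nat.choose (m + n - 1) (k + m)) := by
  obtain ⟨m, rfl⟩ := Nat.exists_eq_add_of_le' hm
  rw [bridgeJoin_top_pathGraph, rwlCount_lollipop_add_one, lollipopBinomialSum,
    Nat.add_sub_cancel, show m + 1 + n - 1 = m + n by omega]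
end
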